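/- Let E be a trace-preserving completely positive map on M_n(ℂ) with a positive definite fixed point. Then the set Fix(E†) = {X : E†(X) = X} is a *-subalgebra of M_n(ℂ): it is a linear subspace closed under matrix multiplication and Hermitian conjugation, and contains the identity. -/

import Mathlib

/-!
Linearity of `E†` and its compatibility with `ᴴ` are formal; the content is closure under
products. For `X ∈ Fix(E†)` put `Cᵢ = [Kᵢ, X]`. Expanding with `Σ KᵢᴴKᵢ = 1` and
`E†(X) = X`, `E†(Xᴴ) = Xᴴ` gives `Σ CᵢᴴCᵢ = E†(XᴴX) - XᴴX`, whose pairing with `ρ₀` vanishes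
because `tr(ρ₀ E†(Z)) = tr(E(ρ₀) Z) = tr(ρ₀ Z)`. Each `tr(Cᵢ ρ₀ Cᵢᴴ)` is nonnegative, so all
vanish, and `ρ₀ > 0` forces `Cᵢ = 0`. Hence `Fix(E†)` is the commutant of the Kraus operators,
which is an algebra.
-/

open Matrix
open scoped ComplexOrder

namespace Matrix

variable {ι m n R 𝕜 : Type*} [Fintype ι] [Fintype m] [Fintype n]

theorem trace_mul_sum_mul_mul [CommSemiring R] (ρ Z : Matrix n n R) (A B : ι → Matrix n n R) :
    (ρ * ∑ i, A i * Z * B i).trace = ((∑ i, B i * ρ * A i) * Z).trace := by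
  simp only [Finset.mul_sum, Finset.sum_mul, trace_sum]
  refine Finset.sum_congr rfl fun i _ => ?_
  rw [← mul_assoc, trace_mul_comm, ← mul_assoc, ← mul_assoc]

theorem conjTranspose_sum_conjTranspose_mul_mul [Semiring R] [StarRing R]
    (K : ι → Matrix n n R) (X : Matrix n n R) :
    (∑ i, (K i)ᴴ * X * K i)ᴴ = ∑ i, (K i)ᴴ * Xᴴ * K i := by
  simp only [conjTranspose_sum, conjTranspose_mul, conjTranspose_conjTranspose, mul_assoc]

theorem sum_conjTranspose_mul_mul_mul_of_commute [Semiring R] [StarRing R]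
    (K : ι → Matrix n n R) (X : Matrix n n R) {Y : Matrix n n R} (hY : ∀ i, Commute (K i) Y) :
    ∑ i, (K i)ᴴ * (X * Y) * K i = (∑ i, (K i)ᴴ * X * K i) * Y := by
  rw [Finset.sum_mul]
  refine Finset.sum_congr rfl fun i _ => ?_
  simp only [mul_assoc]
  rw [(hY i).eq]

theorem sum_conjTranspose_commutator_mul_commutator [Ring R] [StarRing R]
    (K : ι → Matrix n n R) (X : Matrix n n R) :
    ∑ i, (K i * X - X * K i)ᴴ * (K i * X - X * K i) =
      ∑ i, (K i)ᴴ * (Xᴴ * X) * K i - Xᴴ * ∑ i, (K i)ᴴ * X * K i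
        - (∑ i, (K i)ᴴ * Xᴴ * K i) * X + Xᴴ * (∑ i, (K i)ᴴ * K i) * X := by
  simp only [Finset.mul_sum, Finset.sum_mul, ← Finset.sum_sub_distrib, ← Finset.sum_add_distrib]
  refine Finset.sum_congr rfl fun i _ => ?_
  simp only [conjTranspose_sub, conjTranspose_mul]
  noncomm_ring

theorem PosDef.eq_zero_of_trace_mul_mul_conjTranspose_eq_zero [RCLike 𝕜] {ρ : Matrix n n 𝕜}
    (hρ : ρ.PosDef) {C : Matrix m n 𝕜} (h : (C * ρ * Cᴴ).trace = 0) : C = 0 := by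
  have hdiag : ∀ i, (C * ρ * Cᴴ) i i = star (star (C i)) ⬝ᵥ (ρ *ᵥ star (C i)) := fun i => by
    simp only [star_star, mul_apply, dotProduct, mulVec, conjTranspose_apply, Pi.star_apply,
      Finset.mul_sum, Finset.sum_mul]
    rw [Finset.sum_comm]
    simp only [mul_assoc]
  have hnonneg : ∀ i, 0 ≤ (C * ρ * Cᴴ) i i := fun i => by
    rw [hdiag]
    exact hρ.posSemidef.dotProduct_mulVec_nonneg _
  ext i j
  have hi : (C * ρ * Cᴴ) i i = 0 :=
    (Finset.sum_eq_zero_iff_of_nonneg fun i _ => hnonneg i).mp h i (Finset.mem_univ i)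
  have hrow : star (C i) = 0 := by
    by_contra hne
    exact (hρ.dotProduct_mulVec_pos hne).ne' (hdiag i ▸ hi)
  simpa using congr_fun hrow j

theorem commute_of_sum_conjTranspose_mul_mul_eq_self [RCLike 𝕜] [DecidableEq n]
    {K : ι → Matrix n n 𝕜} (hTP : ∑ i, (K i)ᴴ * K i = 1) {ρ : Matrix n n 𝕜} (hρ : ρ.PosDef)
    (hfix : ∑ i, K i * ρ * (K i)ᴴ = ρ) {X : Matrix n n 𝕜} (hX : ∑ i, (K i)ᴴ * X * K i = X)
    (i : ι) : Commute (K i) X := by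
  set C : ι → Matrix n n 𝕜 := fun j => K j * X - X * K j with hC
  have hXs : ∑ j, (K j)ᴴ * Xᴴ * K j = Xᴴ := by
    rw [← conjTranspose_sum_conjTranspose_mul_mul, hX]
  have hdefect : ∑ j, (C j)ᴴ * C j = ∑ j, (K j)ᴴ * (Xᴴ * X) * K j - Xᴴ * X := by
    rw [hC, sum_conjTranspose_commutator_mul_commutator, hX, hXs, hTP, mul_one]
    abel
  have htrace : ∑ j, (C j * ρ * (C j)ᴴ).trace = 0 := calc
    ∑ j, (C j * ρ * (C j)ᴴ).trace = (ρ * ∑ j, (C j)ᴴ * C j).trace := by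
      rw [Finset.mul_sum, trace_sum]
      exact Finset.sum_congr rfl fun j _ => by rw [trace_mul_cycle, trace_mul_comm]
    _ = (ρ * ∑ j, (K j)ᴴ * (Xᴴ * X) * K j).trace - (ρ * (Xᴴ * X)).trace := by
      rw [hdefect, mul_sub, trace_sub]
    _ = 0 := by rw [trace_mul_sum_mul_mul, hfix, sub_self]
  have hi : (C i * ρ * (C i)ᴴ).trace = 0 :=
    (Finset.sum_eq_zero_iff_of_nonneg fun j _ =>
      (hρ.posSemidef.mul_mul_conjTranspose_same (C j)).trace_nonneg).mp htrace i
      (Finset.mem_univ i)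
  exact sub_eq_zero.mp (hρ.eq_zero_of_trace_mul_mul_conjTranspose_eq_zero hi)

end Matrix

/-- For a CPTP map `E(ρ) = Σᵢ Kᵢ ρ Kᵢᴴ` with a positive definite fixed point,
the fixed-point set of the adjoint map `E†(X) = Σᵢ Kᵢᴴ X Kᵢ` is a
*-subalgebra of the matrix algebra: it contains the identity and is closed
under addition, scalar multiplication, multiplication and conjugate
transposition. -/
theorem fix_adjoint_is_star_subalgebra {n k : ℕ}
    (K : Fin k → Matrix (Fin n) (Fin n) ℂ)
    (hTP : ∑ i, (K i)ᴴ * K i = 1)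
    (ρ₀ : Matrix (Fin n) (Fin n) ℂ) (hρ₀ : ρ₀.PosDef)
    (hfix : ∑ i, K i * ρ₀ * (K i)ᴴ = ρ₀) :
    (∑ i, (K i)ᴴ * (1 : Matrix (Fin n) (Fin n) ℂ) * K i = 1) ∧
    (∀ X Y : Matrix (Fin n) (Fin n) ℂ,
      (∑ i, (K i)ᴴ * X * K i = X) → (∑ i, (K i)ᴴ * Y * K i = Y) →
      ∑ i, (K i)ᴴ * (X + Y) * K i = X + Y) ∧
    (∀ (c : ℂ) (X : Matrix (Fin n) (Fin n) ℂ),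
      (∑ i, (K i)ᴴ * X * K i = X) →
      ∑ i, (K i)ᴴ * (c • X) * K i = c • X) ∧
    (∀ X Y : Matrix (Fin n) (Fin n) ℂ,
      (∑ i, (K i)ᴴ * X * K i = X) → (∑ i, (K i)ᴴ * Y * K i = Y) →
      ∑ i, (K i)ᴴ * (X * Y) * K i = X * Y) ∧
    (∀ X : Matrix (Fin n) (Fin n) ℂ,
      (∑ i, (K i)ᴴ * X * K i = X) →
      ∑ i, (K i)ᴴ * Xᴴ * K i = Xᴴ) := by
  refine ⟨by simpa only [mul_one] using hTP, ?_, ?_, ?_, ?_⟩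
  · intro X Y hX hY
    simp only [mul_add, add_mul, Finset.sum_add_distrib, hX, hY]
  · intro c X hX
    simp only [Matrix.mul_smul, Matrix.smul_mul, ← Finset.smul_sum, hX]
  · intro X Y hX hY
    rw [sum_conjTranspose_mul_mul_mul_of_commute K X
      (commute_of_sum_conjTranspose_mul_mul_eq_self hTP hρ₀ hfix hY), hX]
  · intro X hX
    rw [← conjTranspose_sum_conjTranspose_mul_mul, hX]
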